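/- If {A₁,…,Aₙ} (n > 1) is a set of pairwise distinct formulas, each of which is a literal or disjunction of literals containing no complementary literals, while the disjunction A₁ ∨ … ∨ Aₙ does contain a pair of complementary literals, then ∅ ⊩ {A₁,…,Aₙ}, i.e., every Boolean valuation makes at least one Aᵢ true. -/

import Mathlib

inductive PForm where
  | atom : ℕ → PForm
  | neg : PForm → PForm
  | conj : PForm → PForm → PForm
  | disj : PForm → PForm → PForm
  | impl : PForm → PForm → PForm
deriving DecidableEq

def PForm.eval (v : ℕ → Bool) : PForm → Bool
  | .atom n => v n
  | .neg A => !(A.eval v)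
  | .conj A B => A.eval v && B.eval v
  | .disj A B => A.eval v || B.eval v
  | .impl A B => !(A.eval v) || B.eval v

/-- Single-conclusion entailment. -/
def scEnt (X : Set PForm) (B : PForm) : Prop :=
  ∀ v : ℕ → Bool, (∀ A ∈ X, A.eval v = true) → B.eval v = true

/-- Multiple-conclusion entailment. -/
def mcEnt (X Y : Set PForm) : Prop :=
  ∀ v : ℕ → Bool, (∀ A ∈ X, A.eval v = true) → ∃ B ∈ Y, B.eval v = true

/-- A literal: an atom together with a polarity. -/
def litForm : ℕ × Bool → PForm
  | (x, true) => PForm.atom x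
  | (x, false) => PForm.neg (PForm.atom x)

/-- The disjunction of a clause (list of literals); the empty clause is mapped to
an unsatisfiable formula. -/
def clauseForm : List (ℕ × Bool) → PForm
  | [] => PForm.conj (PForm.atom 0) (PForm.neg (PForm.atom 0))
  | [a] => litForm a
  | a :: l => PForm.disj (litForm a) (clauseForm l)

lemma clauseForm_true_of_mem (v : ℕ → Bool) (a : ℕ × Bool) :
    ∀ c : List (ℕ × Bool), a ∈ c → (litForm a).eval v = true →
    (clauseForm c).eval v = true := by
  intro c
  induction c with
  | nil => intro h; simp at h
  | cons b l ih =>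
    intro hmem hl
    cases l with
    | nil =>
      simp at hmem; subst hmem; simpa [clauseForm] using hl
    | cons b' l' =>
      rcases List.mem_cons.1 hmem with h | h
      · subst h; simp [clauseForm, PForm.eval, hl]
      · simp [clauseForm, PForm.eval, ih h hl]

theorem pmce_axioms_valid (cs : List (List (ℕ × Bool)))
    (hlen : 1 < cs.length)
    (hne : ∀ c ∈ cs, c ≠ [])
    (hnodup : (cs.map clauseForm).Nodup)
    (hnocomp : ∀ c ∈ cs, ∀ x : ℕ, ¬ ((x, true) ∈ c ∧ (x, false) ∈ c))
    (hcomp : ∃ x : ℕ, (x, true) ∈ cs.flatten ∧ (x, false) ∈ cs.flatten) :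
    mcEnt ∅ {F | ∃ c ∈ cs, F = clauseForm c} := by
  intro v _
  obtain ⟨x, hT, hF⟩ := hcomp
  rcases List.mem_flatten.1 hT with ⟨c1, hc1, hx1⟩
  rcases List.mem_flatten.1 hF with ⟨c2, hc2, hx2⟩
  cases hv : v x with
  | true =>
    refine ⟨clauseForm c1, ⟨c1, hc1, rfl⟩, ?_⟩
    exact clauseForm_true_of_mem v (x, true) c1 hx1 (by simp [litForm, PForm.eval, hv])
  | false =>
    refine ⟨clauseForm c2, ⟨c2, hc2, rfl⟩, ?_⟩
    exact clauseForm_true_of_mem v (x, false) c2 hx2 (by simp [litForm, PForm.eval, hv])
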